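/- Let (I_n) be an interval partition of ℕ with |I_{n+1}| ≥ n · ∑_{i≤n} |I_i|, and let 0 < j < k-1. If A ⊆ ℕ is a (j,k)-set (|A ∩ I_n|/|I_n| ∈ [j/k,(j+1)/k] for almost all n), then the lower density of A is at most (j+1)/k and the upper density of A is at least j/k. -/

import Mathlib

/-!
At the right endpoint `b = e (m + 2)` of an interval `[a, b)`, with `a = e (m + 1)`, the growth
condition gives `(m + 1) a ≤ b`, so the initial segment `[0, a)` carries at most a `1 / (m + 1)`
share of `[0, b)`. Hence the density of `A` up to `b` is within `1 / (m + 1)` of its relative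
density in `[a, b)`, which lies in `[j / k, (j + 1) / k]`. Along the subsequence of endpoints the
densities therefore accumulate in `[j / k, (j + 1) / k]`, bounding the liminf and the limsup.
-/

open Filter Topology

open scoped Classical in
noncomputable def cnt (A : Set ℕ) (n : ℕ) : ℕ :=
  ((Finset.range n).filter (fun m => m ∈ A)).card

open scoped Classical in
noncomputable def cntIn (A : Set ℕ) (a b : ℕ) : ℕ :=
  ((Finset.Ico a b).filter (fun m => m ∈ A)).card

def dens (A : Set ℕ) (r : ℝ) : Prop :=
  Tendsto (fun n => (cnt A n : ℝ) / n) atTop (𝓝 r)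

lemma cnt_add_cntIn (A : Set ℕ) {a b : ℕ} (hab : a ≤ b) : cnt A a + cntIn A a b = cnt A b := by
  classical
  rw [cnt, cnt, cntIn, Finset.range_eq_Ico, Finset.range_eq_Ico,
    ← Finset.Ico_union_Ico_eq_Ico (Nat.zero_le a) hab, Finset.filter_union,
    Finset.card_union_of_disjoint ((Finset.Ico_disjoint_Ico_consecutive 0 a b).mono
      (Finset.filter_subset _ _) (Finset.filter_subset _ _))]

lemma cnt_le (A : Set ℕ) (n : ℕ) : cnt A n ≤ n := by
  classical
  simpa [cnt] using Finset.card_filter_le (Finset.range n) (· ∈ A)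

lemma cntIn_le (A : Set ℕ) (a b : ℕ) : cntIn A a b ≤ b - a := by
  classical
  simpa [cntIn] using Finset.card_filter_le (Finset.Ico a b) (· ∈ A)

lemma cnt_div_mem_Icc (A : Set ℕ) (n : ℕ) : (cnt A n : ℝ) / n ∈ Set.Icc 0 1 :=
  ⟨by positivity, div_le_one_of_le₀ (by exact_mod_cast cnt_le A n) n.cast_nonneg⟩

lemma abs_cnt_div_sub_cntIn_div_le (A : Set ℕ) {a b : ℕ} (hab : a ≤ b) :
    |(cnt A b : ℝ) / b - cntIn A a b / (b - a : ℕ)| ≤ a / b := by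
  set r : ℝ := cntIn A a b / (b - a : ℕ)
  have hr0 : 0 ≤ r := by positivity
  have hr1 : r ≤ 1 := div_le_one_of_le₀ (by exact_mod_cast cntIn_le A a b) (by positivity)
  have hcntIn : (cntIn A a b : ℝ) = r * (b - a : ℕ) := by
    rcases Nat.eq_zero_or_pos (b - a) with h | h
    · have : cntIn A a b = 0 := Nat.eq_zero_of_le_zero (h ▸ cntIn_le A a b)
      simp [this, h]
    · exact (div_mul_cancel₀ _ (by positivity)).symm
  have hca : (cnt A a : ℝ) ≤ a := by exact_mod_cast cnt_le A a
  rcases Nat.eq_zero_or_pos b with hb | hb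
  · simp [r, hb]
  have key : (cnt A b : ℝ) / b - r = (cnt A a - r * a) / b := by
    rw [← cnt_add_cntIn A hab, Nat.cast_add, hcntIn, Nat.cast_sub hab]
    field_simp
    ring
  rw [key, abs_div, Nat.abs_cast]
  refine div_le_div_of_nonneg_right (abs_sub_le_iff.2 ⟨?_, ?_⟩) b.cast_nonneg <;>
    nlinarith [(cnt A a).cast_nonneg (α := ℝ), a.cast_nonneg (α := ℝ)]

lemma abs_cnt_div_sub_cntIn_div_le_one_div (A : Set ℕ) {a b m : ℕ} (hab : a ≤ b)
    (hm : (m + 1) * a ≤ b) :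
    |(cnt A b : ℝ) / b - cntIn A a b / (b - a : ℕ)| ≤ 1 / (m + 1) := by
  refine (abs_cnt_div_sub_cntIn_div_le A hab).trans
    (div_le_of_le_mul₀ b.cast_nonneg (by positivity) ?_)
  rw [one_div_mul_eq_div, le_div_iff₀ m.cast_add_one_pos, mul_comm]
  exact_mod_cast hm

lemma succ_mul_le_of_le_sub (e : ℕ → ℕ) (he0 : e 0 = 0) (he : Monotone e)
    (hlen : ∀ n : ℕ, n * (∑ i ∈ Finset.range (n + 1), (e (i + 1) - e i)) ≤ e (n + 2) - e (n + 1))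
    (m : ℕ) : (m + 1) * e (m + 1) ≤ e (m + 2) := by
  have h := hlen m
  rw [Finset.sum_range_tsub he, he0, Nat.sub_zero] at h
  have : e (m + 1) ≤ e (m + 2) := he (by omega)
  rw [add_one_mul]
  omega

section SubsequenceBounds

variable {u r : ℕ → ℝ} {φ : ℕ → ℕ} {c : ℝ}

lemma liminf_le_of_tendsto_comp_sub (hu : IsBoundedUnder (· ≥ ·) atTop u)
    (hφ : Tendsto φ atTop atTop) (hr : ∀ᶠ m in atTop, r m ≤ c)
    (hur : Tendsto (fun m => u (φ m) - r m) atTop (𝓝 0)) : liminf u atTop ≤ c := by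
  refine le_of_forall_pos_le_add fun ε hε => liminf_le_of_frequently_le ?_ hu
  refine hφ.frequently (Eventually.frequently ?_)
  filter_upwards [hr, hur.eventually (gt_mem_nhds hε)] with m hrm hm
  linarith

lemma le_limsup_of_tendsto_comp_sub (hu : IsBoundedUnder (· ≤ ·) atTop u)
    (hφ : Tendsto φ atTop atTop) (hr : ∀ᶠ m in atTop, c ≤ r m)
    (hur : Tendsto (fun m => u (φ m) - r m) atTop (𝓝 0)) : c ≤ limsup u atTop := by
  refine le_of_forall_sub_le fun ε hε => le_limsup_of_frequently_le ?_ hu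
  refine hφ.frequently (Eventually.frequently ?_)
  filter_upwards [hr, hur.eventually (lt_mem_nhds (neg_lt_zero.2 hε))] with m hrm hm
  linarith

end SubsequenceBounds

theorem stmt7_general (e : ℕ → ℕ) (he0 : e 0 = 0) (heM : StrictMono e)
    (hlen : ∀ n : ℕ, n * (∑ i ∈ Finset.range (n + 1), (e (i + 1) - e i)) ≤ e (n + 2) - e (n + 1))
    (j k : ℕ) (A : Set ℕ)
    (hA : ∀ᶠ n in atTop,
      (j : ℝ) / k ≤ (cntIn A (e n) (e (n + 1)) : ℝ) / ((e (n + 1) - e n : ℕ) : ℝ) ∧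
      (cntIn A (e n) (e (n + 1)) : ℝ) / ((e (n + 1) - e n : ℕ) : ℝ) ≤ ((j : ℝ) + 1) / k) :
    Filter.liminf (fun n => (cnt A n : ℝ) / n) atTop ≤ ((j : ℝ) + 1) / k ∧
    (j : ℝ) / k ≤ Filter.limsup (fun n => (cnt A n : ℝ) / n) atTop := by
  set r : ℕ → ℝ := fun n => (cntIn A (e n) (e (n + 1)) : ℝ) / ((e (n + 1) - e n : ℕ) : ℝ)
  have hr : ∀ᶠ m in atTop, j / k ≤ r (m + 1) ∧ r (m + 1) ≤ (j + 1) / k :=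
    (tendsto_add_atTop_nat 1).eventually hA
  have hφ : Tendsto (fun m => e (m + 2)) atTop atTop :=
    heM.tendsto_atTop.comp (tendsto_add_atTop_nat 2)
  have hur : Tendsto (fun m => (cnt A (e (m + 2)) : ℝ) / e (m + 2) - r (m + 1)) atTop (𝓝 0) := by
    refine squeeze_zero_norm (fun m => ?_) tendsto_one_div_add_atTop_nhds_zero_nat
    exact abs_cnt_div_sub_cntIn_div_le_one_div A (heM.monotone (by omega))
      (succ_mul_le_of_le_sub e he0 heM.monotone hlen m)
  have hbdd := fun n => cnt_div_mem_Icc A n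
  exact ⟨liminf_le_of_tendsto_comp_sub (isBoundedUnder_of ⟨0, fun n => (hbdd n).1⟩) hφ
      (hr.mono fun _ h => h.2) hur,
    le_limsup_of_tendsto_comp_sub (isBoundedUnder_of ⟨1, fun n => (hbdd n).2⟩) hφ
      (hr.mono fun _ h => h.1) hur⟩

theorem stmt7 (e : ℕ → ℕ) (he0 : e 0 = 0) (heM : StrictMono e)
    (hlen : ∀ n : ℕ, n * (∑ i ∈ Finset.range (n + 1), (e (i + 1) - e i)) ≤ e (n + 2) - e (n + 1))
    (j k : ℕ) (hj : 0 < j) (hjk : j + 1 < k) (A : Set ℕ)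
    (hA : ∀ᶠ n in atTop,
      (j : ℝ) / k ≤ (cntIn A (e n) (e (n + 1)) : ℝ) / ((e (n + 1) - e n : ℕ) : ℝ) ∧
      (cntIn A (e n) (e (n + 1)) : ℝ) / ((e (n + 1) - e n : ℕ) : ℝ) ≤ ((j : ℝ) + 1) / k) :
    Filter.liminf (fun n => (cnt A n : ℝ) / n) atTop ≤ ((j : ℝ) + 1) / k ∧
    (j : ℝ) / k ≤ Filter.limsup (fun n => (cnt A n : ℝ) / n) atTop :=
  stmt7_general e he0 heM hlen j k A hA
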